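/- Let G be a finite simple graph on n vertices, let k ≥ 2 be an integer, and let c₁ ≥ c₂ ≥ ⋯ ≥ c_m be the sizes of the connected components of G. Suppose that (i) c₁ ≤ n/k, (ii) the number of components of size at most 2 is at least r·n for some real r > 0, (iii) c_i ≤ r·n/k for every index i > k, and additionally (iv) the number of components of size exactly 1 (isolated vertices) is at least k − 1. Then the k-section width satisfies w_k(G) = 0. -/

import Mathlib

open Finset

/-- The size (number of vertices) of a connected component of a graph on `Fin n`. -/
noncomputable def compSize {n : ℕ} (G : SimpleGraph (Fin n)) (C : G.ConnectedComponent) : ℕ :=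
  {v : Fin n | G.connectedComponentMk v = C}.ncard

/-- A labelled partition `P : Fin n → Fin k` is balanced if the part sizes pairwise
differ by at most 1. -/
def IsBalancedPartition {n k : ℕ} (P : Fin n → Fin k) : Prop :=
  ∀ j j' : Fin k,
    ((Finset.univ.filter (fun i => P i = j)).card : ℤ)
      ≤ ((Finset.univ.filter (fun i => P i = j')).card : ℤ) + 1

/-- The number of edges of `G` whose two endpoints lie in two distinct parts of `P`. -/
noncomputable def cutSize {n k : ℕ} (G : SimpleGraph (Fin n)) (P : Fin n → Fin k) : ℕ :=
  {e ∈ G.edgeSet | ¬ (Sym2.map P e).IsDiag}.ncard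

/-- The `k`-section width: the minimum number of cross edges over balanced `k`-partitions. -/
noncomputable def kSectionWidth {n : ℕ} (G : SimpleGraph (Fin n)) (k : ℕ) : ℕ :=
  sInf {w | ∃ P : Fin n → Fin k, IsBalancedPartition P ∧ cutSize G P = w}

/-! Place the components, in order of nonincreasing size, each into a currently lightest part
(longest-processing-time scheduling); no edge is cut. Let `M` be a heaviest final part and `t` the
last component placed in it. When `t` arrived, `M` was lightest, so every part ends within `c t`
of `M`. If `t < k`, then `M` was still empty, so its load `c t ≤ n / k` is at most the average and
all parts are equal. If `t ≥ k`, then `c t ≤ r n / k`, and `c t ≥ 3` is impossible: the at least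
`r n` components of size at most 2 all come after `t` and go to the other `k - 1` parts, at most
`c t` to each. If `c t = 2`, the at least `k - 1` isolated vertices come after `t`, and each lifts
one part still at the level `M` had before `t`. -/

theorem le_of_forall_le_of_card_mul_le_sum {ι : Type*} [Fintype ι] {L : ι → ℕ} {a : ℕ}
    (hle : ∀ i, L i ≤ a) (hsum : Fintype.card ι * a ≤ ∑ i, L i) (i : ι) : a ≤ L i := by
  by_contra! h
  have := sum_lt_sum (fun j _ => hle j) ⟨i, mem_univ i, h⟩
  simp only [sum_const, card_univ, smul_eq_mul] at this
  omega

noncomputable def greedyLoad (k : ℕ) [NeZero k] (c : ℕ → ℕ) : ℕ → Fin k → ℕ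
  | 0 => 0
  | i + 1 => fun j =>
    greedyLoad k c i j + if j = Function.argmin (greedyLoad k c i) then c i else 0

noncomputable def greedyPart (k : ℕ) [NeZero k] (c : ℕ → ℕ) (i : ℕ) : Fin k :=
  Function.argmin (greedyLoad k c i)

noncomputable def lightParts (k : ℕ) [NeZero k] (c : ℕ → ℕ) (i v : ℕ) : Finset (Fin k) :=
  {j | greedyLoad k c i j ≤ v}

variable {k : ℕ} [NeZero k] (c : ℕ → ℕ)

theorem greedyLoad_succ (i : ℕ) (j : Fin k) :
    greedyLoad k c (i + 1) j = greedyLoad k c i j + if j = greedyPart k c i then c i else 0 :=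
  rfl

theorem greedyLoad_greedyPart_le (i : ℕ) (j : Fin k) :
    greedyLoad k c i (greedyPart k c i) ≤ greedyLoad k c i j :=
  Function.argmin_le _ j

theorem greedyLoad_eq_sum (i : ℕ) (j : Fin k) :
    greedyLoad k c i j = ∑ x ∈ range i, if greedyPart k c x = j then c x else 0 := by
  induction i with
  | zero => rfl
  | succ i ih => simp only [greedyLoad_succ, ih, sum_range_succ, eq_comm]

theorem greedyLoad_add_sum_Ico {a b : ℕ} (hab : a ≤ b) (j : Fin k) :
    greedyLoad k c a j + ∑ x ∈ Ico a b, (if greedyPart k c x = j then c x else 0) =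
      greedyLoad k c b j := by
  simp only [greedyLoad_eq_sum, sum_range_add_sum_Ico _ hab]

theorem greedyLoad_mono {a b : ℕ} (hab : a ≤ b) (j : Fin k) :
    greedyLoad k c a j ≤ greedyLoad k c b j :=
  greedyLoad_add_sum_Ico c hab j ▸ Nat.le_add_right _ _

theorem sum_greedyLoad (i : ℕ) : ∑ j, greedyLoad k c i j = ∑ x ∈ range i, c x := by
  simp only [greedyLoad_eq_sum]
  rw [sum_comm]
  simp

theorem exists_greedyLoad_eq_zero {i : ℕ} (hi : i < k) : ∃ j, greedyLoad k c i j = 0 := by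
  have : #((range i).image (greedyPart k c)) < #(univ : Finset (Fin k)) := by
    simpa using card_image_le.trans_lt (by simpa using hi)
  obtain ⟨j, -, hj⟩ := exists_mem_notMem_of_card_lt_card this
  refine ⟨j, ?_⟩
  rw [greedyLoad_eq_sum]
  refine sum_eq_zero fun x hx => if_neg fun h => hj ?_
  exact mem_image.mpr ⟨x, hx, h⟩

theorem card_lightParts_le {v a b : ℕ} (hv : ∀ j, v ≤ greedyLoad k c a j) (hab : a ≤ b) :
    #(lightParts k c b v) ≤ #(lightParts k c a v) - #{x ∈ Ico a b | 0 < c x} := by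
  induction b, hab using Nat.le_induction with
  | base => simp
  | succ b hab ih =>
    have hsub : lightParts k c (b + 1) v ⊆ lightParts k c b v := fun j => by
      simpa [lightParts] using (greedyLoad_mono c b.le_succ j).trans
    -- a positive item goes to a lightest part, which then stops being light
    have hstep : 0 < c b → #(lightParts k c b v) = 0 ∨
        #(lightParts k c (b + 1) v) < #(lightParts k c b v) := by
      intro hc
      refine or_iff_not_imp_left.mpr fun hne => card_lt_card ⟨hsub, fun hsup => ?_⟩
      obtain ⟨j, hj⟩ := card_ne_zero.mp hne
      have hbin : greedyPart k c b ∈ lightParts k c b v :=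
        mem_filter.mpr ⟨mem_univ _, (greedyLoad_greedyPart_le c b j).trans (mem_filter.mp hj).2⟩
      have := (mem_filter.mp (hsup hbin)).2
      rw [greedyLoad_succ, if_pos rfl] at this
      have := hv (greedyPart k c b) |>.trans (greedyLoad_mono c hab _)
      omega
    have hcount : #{x ∈ Ico a (b + 1) | 0 < c x} =
        #{x ∈ Ico a b | 0 < c x} + if 0 < c b then 1 else 0 := by
      rw [Nat.Ico_succ_right_eq_insert_Ico hab, filter_insert]
      split_ifs with hc
      · exact card_insert_of_notMem (by simp)
      · rfl
    have := card_le_card hsub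
    split_ifs at hcount with hc
    · have := hstep hc
      omega
    · omega

theorem greedyLoad_greedyPart_le_of_le {a b : ℕ} (hab : a ≤ b) (j : Fin k) :
    greedyLoad k c a (greedyPart k c a) ≤ greedyLoad k c b j :=
  (greedyLoad_greedyPart_le c a j).trans (greedyLoad_mono c hab j)

def IsLastInPart (k : ℕ) [NeZero k] (c : ℕ → ℕ) (m t : ℕ) : Prop :=
  t < m ∧ ∀ x ∈ Ioo t m, greedyPart k c x ≠ greedyPart k c t

theorem exists_isLastInPart {m : ℕ} {M : Fin k} (hM : greedyLoad k c m M ≠ 0) :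
    ∃ t, IsLastInPart k c m t ∧ greedyPart k c t = M := by
  set S : Finset ℕ := {y ∈ range m | greedyPart k c y = M}
  rw [greedyLoad_eq_sum] at hM
  obtain ⟨x, hx, hxM⟩ := exists_ne_zero_of_sum_ne_zero hM
  have hS : S.Nonempty := ⟨x, mem_filter.mpr ⟨hx, by_contra fun h => hxM (if_neg h)⟩⟩
  obtain ⟨ht, htM⟩ := mem_filter.mp (max'_mem S hS)
  refine ⟨_, ⟨mem_range.mp ht, fun y hy hyM => ?_⟩, htM⟩
  have hyS : y ∈ S := mem_filter.mpr ⟨mem_range.mpr (mem_Ioo.mp hy).2, hyM.trans htM⟩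
  exact (mem_Ioo.mp hy).1.not_ge (le_max' S y hyS)

variable {c} {m t : ℕ}

theorem IsLastInPart.greedyLoad_eq (hlast : IsLastInPart k c m t) :
    greedyLoad k c m (greedyPart k c t) = greedyLoad k c t (greedyPart k c t) + c t := by
  rw [← greedyLoad_add_sum_Ico c (show t + 1 ≤ m from hlast.1), Ico_add_one_left_eq_Ioo,
    sum_eq_zero fun x hx => if_neg (hlast.2 x hx), add_zero, greedyLoad_succ, if_pos rfl]

theorem IsLastInPart.greedyLoad_le_add (hlast : IsLastInPart k c m t) (j : Fin k) :
    greedyLoad k c m (greedyPart k c t) ≤ greedyLoad k c m j + c t := by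
  rw [hlast.greedyLoad_eq]
  exact Nat.add_le_add_right (greedyLoad_greedyPart_le_of_le c hlast.1.le j) _

theorem IsLastInPart.greedyLoad_le_of_lt (hlast : IsLastInPart k c m t) (htk : t < k)
    (havg : k * c t ≤ ∑ x ∈ range m, c x)
    (hmax : ∀ j, greedyLoad k c m j ≤ greedyLoad k c m (greedyPart k c t)) (j : Fin k) :
    greedyLoad k c m (greedyPart k c t) ≤ greedyLoad k c m j := by
  obtain ⟨j₀, hj₀⟩ := exists_greedyLoad_eq_zero c htk
  have hfirst : greedyLoad k c t (greedyPart k c t) = 0 :=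
    Nat.le_zero.mp (hj₀ ▸ greedyLoad_greedyPart_le c t j₀)
  refine le_of_forall_le_of_card_mul_le_sum hmax ?_ j
  rwa [sum_greedyLoad, Fintype.card_fin, hlast.greedyLoad_eq, hfirst, zero_add]

theorem IsLastInPart.greedyLoad_le_succ_of_eq_two (hlast : IsLastInPart k c m t)
    (hanti : AntitoneOn c (Set.Iio m)) (htwo : c t = 2)
    (hsingle : k - 1 ≤ #{x ∈ range m | c x = 1}) (j : Fin k) :
    greedyLoad k c m (greedyPart k c t) ≤ greedyLoad k c m j + 1 := by
  set v := greedyLoad k c t (greedyPart k c t)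
  have hlight : #(lightParts k c (t + 1) v) ≤ k - 1 := by
    have : lightParts k c (t + 1) v ⊆ univ.erase (greedyPart k c t) := fun j hj => by
      refine mem_erase.mpr ⟨fun h => ?_, mem_univ j⟩
      have := (mem_filter.mp hj).2
      rw [h, greedyLoad_succ, if_pos rfl] at this
      omega
    simpa using card_le_card this
  -- every singleton comes after the item `t` of size 2
  have hsingletons : #{x ∈ range m | c x = 1} ≤ #{x ∈ Ico (t + 1) m | 0 < c x} := by
    refine card_le_card fun x hx => ?_
    obtain ⟨hxm, hx1⟩ := mem_filter.mp hx
    have hxm := mem_range.mp hxm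
    have htx : t < x := by
      by_contra! hxt
      have := hanti hxm hlast.1 hxt
      omega
    exact mem_filter.mpr ⟨mem_Ico.mpr ⟨htx, hxm⟩, by omega⟩
  have hempty := card_lightParts_le (v := v) (a := t + 1) c
    (greedyLoad_greedyPart_le_of_le c t.le_succ)
    (show t + 1 ≤ m from hlast.1)
  have hj : j ∉ lightParts k c m v := fun hj => by
    have := card_pos.mpr ⟨j, hj⟩
    omega
  have : v < greedyLoad k c m j := by simpa [lightParts] using hj
  rw [hlast.greedyLoad_eq, htwo]
  omega

theorem IsLastInPart.le_two (hlast : IsLastInPart k c m t)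
    (hanti : AntitoneOn c (Set.Iio m)) (hpos : ∀ x < m, 0 < c x)
    (htail : k * c t ≤ #{x ∈ range m | c x ≤ 2})
    (hmax : ∀ j, greedyLoad k c m j ≤ greedyLoad k c m (greedyPart k c t)) : c t ≤ 2 := by
  by_contra! hthree
  have hsmall : {x ∈ range m | c x ≤ 2} ⊆ Ioo t m := fun x hx => by
    obtain ⟨hxm, hx2⟩ := mem_filter.mp hx
    have hxm := mem_range.mp hxm
    refine mem_Ioo.mpr ⟨?_, hxm⟩
    by_contra! hxt
    have := hanti hxm hlast.1 hxt
    omega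
  -- after `t`, the part of `t` receives nothing and every other part at most `c t`
  have hafter : ∑ x ∈ Ioo t m, c x ≤ (k - 1) * c t := by
    rw [← sum_fiberwise (Ioo t m) (greedyPart k c)]
    calc _ ≤ ∑ j : Fin k, if j = greedyPart k c t then 0 else c t := sum_le_sum fun j _ => ?_
      _ = (k - 1) * c t := by simp [sum_ite, filter_ne']
    split_ifs with hj
    · exact (sum_eq_zero fun x hx => absurd ((mem_filter.mp hx).2.trans hj)
        (hlast.2 x (mem_filter.mp hx).1)).le
    · have hrest := greedyLoad_add_sum_Ico c (show t + 1 ≤ m from hlast.1) j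
      rw [Ico_add_one_left_eq_Ioo, ← sum_filter] at hrest
      have := hmax j
      have := hlast.greedyLoad_eq
      have := greedyLoad_greedyPart_le_of_le c (Nat.le_add_right t 1) j
      omega
  have hcount : #{x ∈ range m | c x ≤ 2} ≤ ∑ x ∈ Ioo t m, c x := by
    refine le_trans ?_ (sum_le_sum_of_subset hsmall)
    simpa using card_nsmul_le_sum _ c 1 fun x hx => hpos x (mem_range.mp (mem_filter.mp hx).1)
  have := Nat.le_mul_of_pos_left (c t) (NeZero.pos k)
  rw [Nat.sub_one_mul] at hafter
  omega

theorem greedyLoad_le_add_one {m : ℕ} (hanti : AntitoneOn c (Set.Iio m))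
    (hpos : ∀ x < m, 0 < c x) (havg : ∀ x < m, k * c x ≤ ∑ y ∈ range m, c y)
    (htail : ∀ x < m, k ≤ x → k * c x ≤ #{y ∈ range m | c y ≤ 2})
    (hsingle : k - 1 ≤ #{x ∈ range m | c x = 1}) (j j' : Fin k) :
    greedyLoad k c m j ≤ greedyLoad k c m j' + 1 := by
  obtain ⟨M, -, hM⟩ := exists_max_image univ (greedyLoad k c m) univ_nonempty
  replace hM : ∀ j, greedyLoad k c m j ≤ greedyLoad k c m M := fun j => hM j (mem_univ j)
  suffices ∀ j', greedyLoad k c m M ≤ greedyLoad k c m j' + 1 from (hM j).trans (this j')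
  intro j'
  rcases eq_or_ne (greedyLoad k c m M) 0 with hzero | hne
  · omega
  obtain ⟨t, hlast, rfl⟩ := exists_isLastInPart c hne
  rcases lt_or_ge t k with htk | hkt
  · exact (hlast.greedyLoad_le_of_lt htk (havg t hlast.1) hM j').trans (Nat.le_succ _)
  rcases le_or_gt (c t) 1 with hone | hone
  · exact (hlast.greedyLoad_le_add j').trans (by omega)
  have htwo : c t = 2 := le_antisymm (hlast.le_two hanti hpos (htail t hlast.1 hkt) hM) hone
  exact hlast.greedyLoad_le_succ_of_eq_two hanti htwo hsingle j'

section Components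

variable {n k : ℕ} (G : SimpleGraph (Fin n))

theorem compSize_pos (C : G.ConnectedComponent) : 0 < compSize G C := by
  obtain ⟨v, rfl⟩ := C.exists_rep
  exact (Set.ncard_pos (Set.toFinite _)).mpr ⟨v, rfl⟩

theorem cutSize_comp_connectedComponentMk (f : G.ConnectedComponent → Fin k) :
    cutSize G (fun v => f (G.connectedComponentMk v)) = 0 := by
  rw [cutSize, Set.ncard_eq_zero]
  ext e
  induction e using Sym2.ind with
  | h u v => simpa using fun hadj : G.Adj u v =>
      congrArg f (SimpleGraph.ConnectedComponent.connectedComponentMk_eq_of_adj hadj)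

variable [Fintype G.ConnectedComponent]

theorem card_filter_connectedComponentMk (f : G.ConnectedComponent → Fin k) (j : Fin k) :
    #{v | f (G.connectedComponentMk v) = j} = ∑ C with f C = j, compSize G C := by
  classical
  rw [card_eq_sum_card_fiberwise (f := G.connectedComponentMk) (t := {C | f C = j})
    fun v hv => by simpa using hv]
  refine sum_congr rfl fun C hC => ?_
  rw [compSize, ← Set.ncard_coe_finset]
  congr 1
  ext v
  simp only [coe_filter, Set.mem_ofPred_eq, and_iff_right_iff_imp]
  rintro rfl
  simpa using hC

theorem sum_compSize : ∑ C, compSize G C = n := by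
  simpa using (card_filter_connectedComponentMk G (fun _ => (0 : Fin 1)) 0).symm

theorem kSectionWidth_eq_zero_of_sum_compSize_le (f : G.ConnectedComponent → Fin k)
    (hf : ∀ j j', ∑ C with f C = j, compSize G C ≤ ∑ C with f C = j', compSize G C + 1) :
    kSectionWidth G k = 0 := by
  refine Nat.sInf_eq_zero.mpr (Or.inl ⟨_, fun j j' => ?_, cutSize_comp_connectedComponentMk G f⟩)
  simp only [card_filter_connectedComponentMk]
  exact_mod_cast hf j j'

end Components

theorem exists_balanced_assignment {m k : ℕ} [NeZero k] {c : Fin m → ℕ} (hmono : Antitone c)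
    (hpos : ∀ i, 0 < c i) (havg : ∀ i, k * c i ≤ ∑ x, c x)
    (htail : ∀ i : Fin m, k ≤ (i : ℕ) → k * c i ≤ #{x | c x ≤ 2})
    (hsingle : k - 1 ≤ #{x | c x = 1}) :
    ∃ f : Fin m → Fin k, ∀ j j', ∑ i with f i = j, c i ≤ ∑ i with f i = j', c i + 1 := by
  set c' : ℕ → ℕ := Function.extend Fin.val c 0
  have hc' (i : Fin m) : c' i = c i := Fin.val_injective.extend_apply c 0 i
  have hsum (g : ℕ → ℕ → ℕ) : ∑ x ∈ range m, g x (c' x) = ∑ i : Fin m, g (i : ℕ) (c i) := by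
    simp only [← Fin.sum_univ_eq_sum_range, hc']
  have hcard (p : ℕ → Prop) [DecidablePred p] :
      #{x ∈ range m | p (c' x)} = #{i : Fin m | p (c i)} := by
    simpa only [card_filter] using hsum fun _ y => if p y then 1 else 0
  have hload (j : Fin k) :
      greedyLoad k c' m j = ∑ i ∈ univ.filter (fun i : Fin m => greedyPart k c' i = j), c i := by
    rw [greedyLoad_eq_sum, sum_filter]
    exact hsum fun x y => if greedyPart k c' x = j then y else 0
  refine ⟨fun i => greedyPart k c' i, fun j j' => ?_⟩
  rw [← hload, ← hload]
  have hc'' (x : ℕ) (hx : x < m) : c' x = c ⟨x, hx⟩ := hc' ⟨x, hx⟩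
  refine greedyLoad_le_add_one ?_ (fun x hx => ?_) (fun x hx => ?_) (fun x hx hkx => ?_)
    (hsingle.trans_eq (hcard (· = 1)).symm) j j'
  · intro x hx y hy hxy
    rw [hc'' x hx, hc'' y hy]
    exact hmono (show (⟨x, hx⟩ : Fin m) ≤ ⟨y, hy⟩ from hxy)
  · exact hc'' x hx ▸ hpos _
  · rw [hc'' x hx, hsum fun _ y => y]
    exact havg _
  · rw [hc'' x hx, hcard (· ≤ 2)]
    exact htail ⟨x, hx⟩ hkx

theorem ksection_eq_zero_of_small_components_general
    {n k m : ℕ} (hk : 2 ≤ k) (G : SimpleGraph (Fin n))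
    (c : Fin m → ℕ) (hmono : Antitone c)
    (e : G.ConnectedComponent ≃ Fin m)
    (hsize : ∀ C : G.ConnectedComponent, compSize G C = c (e C))
    (r : ℝ)
    (h1 : ∀ i : Fin m, (c i : ℝ) ≤ (n : ℝ) / k)
    (h2 : r * n ≤ ((Finset.univ.filter (fun i : Fin m => c i ≤ 2)).card : ℝ))
    (h3 : ∀ i : Fin m, k ≤ (i : ℕ) → (c i : ℝ) ≤ r * n / k)
    (h4 : k - 1 ≤ (Finset.univ.filter (fun i : Fin m => c i = 1)).card) :
    kSectionWidth G k = 0 := by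
  have : NeZero k := ⟨by omega⟩
  have : Fintype G.ConnectedComponent := Fintype.ofEquiv (Fin m) e.symm
  have hkR : (0 : ℝ) < k := by positivity
  have hc (i : Fin m) : c i = compSize G (e.symm i) := by rw [hsize, e.apply_symm_apply]
  have hsum : ∑ i, c i = n := by
    rw [← sum_compSize G]
    exact (Fintype.sum_equiv e _ _ hsize).symm
  obtain ⟨f, hf⟩ := exists_balanced_assignment hmono (fun i => hc i ▸ compSize_pos G _)
    (fun i => by
      have := (le_div_iff₀ hkR).mp (h1 i)
      rw [hsum]
      exact_mod_cast (by linarith : (k : ℝ) * c i ≤ n))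
    (fun i hi => by
      have := (le_div_iff₀ hkR).mp (h3 i hi)
      exact_mod_cast (by linarith : (k : ℝ) * c i ≤ (#{x | c x ≤ 2} : ℕ)))
    h4
  have hreindex (j : Fin k) : ∑ C with f (e C) = j, compSize G C = ∑ i with f i = j, c i := by
    simp only [sum_filter]
    exact Fintype.sum_equiv e _ _ fun C => by rw [hsize]
  exact kSectionWidth_eq_zero_of_sum_compSize_le G (fun C => f (e C)) fun j j' => by
    simpa only [hreindex] using hf j j'

theorem ksection_eq_zero_of_small_components
    {n k m : ℕ} (hk : 2 ≤ k) (G : SimpleGraph (Fin n))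
    (c : Fin m → ℕ) (hmono : Antitone c)
    (e : G.ConnectedComponent ≃ Fin m)
    (hsize : ∀ C : G.ConnectedComponent, compSize G C = c (e C))
    (r : ℝ) (hr : 0 < r)
    (h1 : ∀ i : Fin m, (c i : ℝ) ≤ (n : ℝ) / k)
    (h2 : r * n ≤ ((Finset.univ.filter (fun i : Fin m => c i ≤ 2)).card : ℝ))
    (h3 : ∀ i : Fin m, k ≤ (i : ℕ) → (c i : ℝ) ≤ r * n / k)
    (h4 : k - 1 ≤ (Finset.univ.filter (fun i : Fin m => c i = 1)).card) :
    kSectionWidth G k = 0 :=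
  ksection_eq_zero_of_small_components_general hk G c hmono e hsize r h1 h2 h3 h4
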